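/- arXiv:2404.17863 — 2 statements merged into one kernel-verified Lean document; each statement's English description precedes it below -/
import Mathlib

section
/- Let T ∈ B(H) be any bounded operator that commutes with each of the six operators A, A*, B, B*, D, D*. Then for all d, d′ ∈ ℕ and i, i′, j, j′ ∈ ℤ, the matrix coefficients of T satisfy ⟨e_{d′,i′,j′}, T e_{d,i,j}⟩ = δ_{d,d′} · e^{2π√−1·j′(i−i′)θ} · ⟨e_{0,0,0}, T e_{0,i−i′,j−j′}⟩ (where δ_{d,d′} is the Kronecker delta). -/
open scoped InnerProductSpace
noncomputable section

/-!
If `T` commutes with `M`, then `⟪M* x, T y⟫ = ⟪x, T (M y)⟫`. For `M = A` and basis vectors this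
gives the recursion `c_d t(d+1, d'+1) = c_{d'} t(d, d')` for the coefficients in the `ℕ`-indices,
with nonzero weights `c_n = √(1 - |q|^(2(n+1)))`. Since `A* e_{0,i,j} = 0`, commuting with `A` and
with `A*` makes the first column and the first row vanish off the corner, so the coefficients are
diagonal in `d` and constant along the diagonal. On the layer `d = 0`, `B` is the plain shift of
the second index (`q ^ 0 = 1`) and `D` the shift of the third one twisted by a phase linear in the
second index; iterating them moves both target indices to `0`.
-/

abbrev UqH : Type := lp (fun _ : ℕ × ℤ × ℤ => ℂ) 2

def e (d : ℕ) (i j : ℤ) : UqH := lp.single 2 (d, i, j) 1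

theorem eq_ite_of_mul_apply_succ_succ {G₀ : Type*} [GroupWithZero G₀] {f : ℕ → ℕ → G₀}
    {c : ℕ → G₀} (hc : ∀ n, c n ≠ 0) (h : ∀ m n, c m * f (m + 1) (n + 1) = c n * f m n)
    (h_succ_zero : ∀ m, f (m + 1) 0 = 0) (h_zero_succ : ∀ n, f 0 (n + 1) = 0) (m n : ℕ) :
    f m n = if m = n then f 0 0 else 0 := by
  induction m generalizing n with
  | zero => cases n <;> simp [h_zero_succ]
  | succ m ih =>
    cases n with
    | zero => simp [h_succ_zero]
    | succ n =>
      have hmn : f (m + 1) (n + 1) = (c m)⁻¹ * (c n * f m n) := by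
        rw [← h, inv_mul_cancel_left₀ (hc m)]
      by_cases hm : m = n
      · subst hm
        rw [hmn, inv_mul_cancel_left₀ (hc m), ih]
        simp
      · rw [hmn, ih, if_neg hm, if_neg (by omega)]
        simp

theorem eq_zpow_mul_of_apply_add_one {G₀ : Type*} [GroupWithZero G₀] {f : ℤ → ℤ → G₀} {u : G₀}
    (hu : u ≠ 0) (h : ∀ a b, f (a + 1) b = u * f a (b - 1)) (a b : ℤ) :
    f a b = u ^ b * f (a - b) 0 := by
  induction b using Int.induction_on generalizing a with
  | zero => simp
  | succ b ih =>
    rw [← sub_add_cancel a 1, h, add_sub_cancel_right, ih, ← mul_assoc,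
      (Commute.self_zpow₀ u b).eq, ← zpow_add_one₀ hu]
    ring_nf
  | pred b ih =>
    have h' := h a (-b)
    rw [ih, ← inv_mul_eq_iff_eq_mul₀ hu] at h'
    rw [← h', ← mul_assoc, ← zpow_neg_one, ← zpow_add₀ hu]
    ring_nf

theorem inner_star_apply_apply_of_commute {𝕜 E : Type*} [RCLike 𝕜] [NormedAddCommGroup E]
    [InnerProductSpace 𝕜 E] [CompleteSpace E] {T M : E →L[𝕜] E} (h : Commute T M) (x y : E) :
    ⟪star M x, T y⟫_𝕜 = ⟪x, T (M y)⟫_𝕜 := by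
  rw [ContinuousLinearMap.star_eq_adjoint, ContinuousLinearMap.adjoint_inner_left,
    ← mul_apply_eq_comp, ← h.eq, mul_apply_eq_comp]

section

variable {q : ℂ} {θ : ℝ} {A B D T : UqH →L[ℂ] UqH}

theorem inner_e_apply_e_eq_ite (hq1 : ‖q‖ < 1)
    (hA : ∀ (i : ℕ) (j k : ℤ),
      A (e i j k) = ((Real.sqrt (1 - ‖q‖ ^ (2 * (i + 1))) : ℝ) : ℂ) • e (i + 1) j k)
    (hAs : ∀ (i : ℕ) (j k : ℤ),
      (star A) (e i j k) = ((Real.sqrt (1 - ‖q‖ ^ (2 * i)) : ℝ) : ℂ) • e (i - 1) j k)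
    (hTA : Commute T A) (hTAs : Commute T (star A)) (d d' : ℕ) (i i' j j' : ℤ) :
    ⟪e d' i' j', T (e d i j)⟫_ℂ = if d = d' then ⟪e 0 i' j', T (e 0 i j)⟫_ℂ else 0 := by
  have hc : ∀ n : ℕ, ((Real.sqrt (1 - ‖q‖ ^ (2 * (n + 1))) : ℝ) : ℂ) ≠ 0 := fun n ↦ by
    have : ‖q‖ ^ (2 * (n + 1)) < 1 := pow_lt_one₀ (norm_nonneg q) hq1 (by omega)
    exact Complex.ofReal_ne_zero.mpr (Real.sqrt_pos.mpr (by linarith)).ne'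
  have hAs_zero : ∀ j k, star A (e 0 j k) = 0 := by simp [hAs]
  have hAs_succ : ∀ (n : ℕ) j k,
      star A (e (n + 1) j k) = ((Real.sqrt (1 - ‖q‖ ^ (2 * (n + 1))) : ℝ) : ℂ) • e n j k :=
    fun n j k ↦ hAs (n + 1) j k
  refine eq_ite_of_mul_apply_succ_succ (f := fun d d' ↦ ⟪e d' i' j', T (e d i j)⟫_ℂ) hc
    (fun m n ↦ ?_) (fun m ↦ ?_) (fun n ↦ ?_) d d'
  · have h := inner_star_apply_apply_of_commute hTA (e (n + 1) i' j') (e m i j)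
    rw [hAs_succ, hA, inner_smul_left, map_smul, inner_smul_right, Complex.conj_ofReal] at h
    exact h.symm
  · have h := inner_star_apply_apply_of_commute hTA (e 0 i' j') (e m i j)
    rw [hAs_zero, inner_zero_left, hA, map_smul, inner_smul_right] at h
    exact (mul_eq_zero.mp h.symm).resolve_left (hc m)
  · have h := inner_star_apply_apply_of_commute hTAs (e n i' j') (e 0 i j)
    rw [star_star, hA, hAs_zero, map_zero, inner_zero_right, inner_smul_left,
      Complex.conj_ofReal] at h
    exact (mul_eq_zero.mp h).resolve_left (hc n)

theorem inner_e_zero_apply_e_zero_shift_snd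
    (hB : ∀ (i : ℕ) (j k : ℤ), B (e i j k) = (q ^ i) • e i (j + 1) k)
    (hBs : ∀ (i : ℕ) (j k : ℤ), (star B) (e i j k) = ((starRingEnd ℂ) q ^ i) • e i (j - 1) k)
    (hTB : Commute T B) (i i' j j' : ℤ) :
    ⟪e 0 i' j', T (e 0 (i + 1) j)⟫_ℂ = ⟪e 0 (i' - 1) j', T (e 0 i j)⟫_ℂ := by
  simpa [hB, hBs] using (inner_star_apply_apply_of_commute hTB (e 0 i' j') (e 0 i j)).symm

theorem inner_e_zero_apply_e_zero_shift_thd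
    (hD : ∀ (i : ℕ) (j k : ℤ),
      D (e i j k) = Complex.exp (-(2 * (Real.pi : ℂ) * (θ : ℂ) * (j : ℂ)) * Complex.I) • e i j (k + 1))
    (hDs : ∀ (i : ℕ) (j k : ℤ),
      (star D) (e i j k) = Complex.exp ((2 * (Real.pi : ℂ) * (θ : ℂ) * (j : ℂ)) * Complex.I) • e i j (k - 1))
    (hTD : Commute T D) (i i' j j' : ℤ) :
    ⟪e 0 i' j', T (e 0 i (j + 1))⟫_ℂ =
      Complex.exp (2 * Real.pi * θ * (i - i') * Complex.I) * ⟪e 0 i' (j' - 1), T (e 0 i j)⟫_ℂ := by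
  have h := inner_star_apply_apply_of_commute hTD (e 0 i' j') (e 0 i j)
  rw [hDs, hD, inner_smul_left, map_smul, inner_smul_right, ← Complex.exp_conj] at h
  apply mul_left_cancel₀ (Complex.exp_ne_zero (-(2 * Real.pi * θ * i) * Complex.I))
  rw [← h, ← mul_assoc, ← Complex.exp_add]
  congr 2
  simp only [map_mul, map_ofNat, Complex.conj_ofReal, map_intCast, Complex.conj_I]
  ring

end

theorem commutant_matrix_coefficients_general
    (q : ℂ) (hq1 : ‖q‖ < 1)
    (θ : ℝ)
    (A B D : UqH →L[ℂ] UqH)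
    (hA : ∀ (i : ℕ) (j k : ℤ),
      A (e i j k) = ((Real.sqrt (1 - ‖q‖ ^ (2 * (i + 1))) : ℝ) : ℂ) • e (i + 1) j k)
    (hB : ∀ (i : ℕ) (j k : ℤ), B (e i j k) = (q ^ i) • e i (j + 1) k)
    (hD : ∀ (i : ℕ) (j k : ℤ),
      D (e i j k) = Complex.exp (-(2 * (Real.pi : ℂ) * (θ : ℂ) * (j : ℂ)) * Complex.I) • e i j (k + 1))
    (hAs : ∀ (i : ℕ) (j k : ℤ),
      (star A) (e i j k) = ((Real.sqrt (1 - ‖q‖ ^ (2 * i)) : ℝ) : ℂ) • e (i - 1) j k)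
    (hBs : ∀ (i : ℕ) (j k : ℤ), (star B) (e i j k) = ((starRingEnd ℂ) q ^ i) • e i (j - 1) k)
    (hDs : ∀ (i : ℕ) (j k : ℤ),
      (star D) (e i j k) = Complex.exp ((2 * (Real.pi : ℂ) * (θ : ℂ) * (j : ℂ)) * Complex.I) • e i j (k - 1))
    (T : UqH →L[ℂ] UqH)
    (hTA : T * A = A * T) (hTAs : T * star A = star A * T)
    (hTB : T * B = B * T)
    (hTD : T * D = D * T) :
    ∀ (d d' : ℕ) (i i' j j' : ℤ),
      ⟪e d' i' j', T (e d i j)⟫_ℂ =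
        (if d = d' then (1 : ℂ) else 0) *
          Complex.exp ((2 * (Real.pi : ℂ) * (j' : ℂ) * ((i : ℂ) - (i' : ℂ)) * (θ : ℂ)) * Complex.I) *
          ⟪e 0 0 0, T (e 0 (i - i') (j - j'))⟫_ℂ := by
  intro d d' i i' j j'
  have h_snd := eq_zpow_mul_of_apply_add_one one_ne_zero
    (f := fun a b ↦ ⟪e 0 b 0, T (e 0 a (j - j'))⟫_ℂ)
    (fun a b ↦ by simpa using inner_e_zero_apply_e_zero_shift_snd hB hBs hTB a b (j - j') 0) i i'
  have h_thd := eq_zpow_mul_of_apply_add_one (Complex.exp_ne_zero _)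
    (f := fun a b ↦ ⟪e 0 i' b, T (e 0 i a)⟫_ℂ)
    (inner_e_zero_apply_e_zero_shift_thd hD hDs hTD i i') j j'
  rw [inner_e_apply_e_eq_ite hq1 hA hAs hTA hTAs, h_thd, h_snd, one_zpow, one_mul,
    ← Complex.exp_int_mul]
  split_ifs
  · rw [one_mul]
    congr 2
    ring
  · simp

/-- any bounded operator `T` on `H` commuting with `A, A*, B, B*, D, D*`
has matrix coefficients
`⟨e_{d′,i′,j′}, T e_{d,i,j}⟩ = δ_{d,d′} · e^{2π√−1·j′(i−i′)θ} · ⟨e_{0,0,0}, T e_{0,i−i′,j−j′}⟩`. -/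
theorem commutant_matrix_coefficients
    (q : ℂ) (hq0 : 0 < ‖q‖) (hq1 : ‖q‖ < 1)
    (θ : ℝ) (hθ : θ = Complex.arg q / Real.pi)
    (A B D : UqH →L[ℂ] UqH)
    (hA : ∀ (i : ℕ) (j k : ℤ),
      A (e i j k) = ((Real.sqrt (1 - ‖q‖ ^ (2 * (i + 1))) : ℝ) : ℂ) • e (i + 1) j k)
    (hB : ∀ (i : ℕ) (j k : ℤ), B (e i j k) = (q ^ i) • e i (j + 1) k)
    (hD : ∀ (i : ℕ) (j k : ℤ),
      D (e i j k) = Complex.exp (-(2 * (Real.pi : ℂ) * (θ : ℂ) * (j : ℂ)) * Complex.I) • e i j (k + 1))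
    (hAs : ∀ (i : ℕ) (j k : ℤ),
      (star A) (e i j k) = ((Real.sqrt (1 - ‖q‖ ^ (2 * i)) : ℝ) : ℂ) • e (i - 1) j k)
    (hBs : ∀ (i : ℕ) (j k : ℤ), (star B) (e i j k) = ((starRingEnd ℂ) q ^ i) • e i (j - 1) k)
    (hDs : ∀ (i : ℕ) (j k : ℤ),
      (star D) (e i j k) = Complex.exp ((2 * (Real.pi : ℂ) * (θ : ℂ) * (j : ℂ)) * Complex.I) • e i j (k - 1))
    (T : UqH →L[ℂ] UqH)
    (hTA : T * A = A * T) (hTAs : T * star A = star A * T)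
    (hTB : T * B = B * T) (hTBs : T * star B = star B * T)
    (hTD : T * D = D * T) (hTDs : T * star D = star D * T) :
    ∀ (d d' : ℕ) (i i' j j' : ℤ),
      ⟪e d' i' j', T (e d i j)⟫_ℂ =
        (if d = d' then (1 : ℂ) else 0) *
          Complex.exp ((2 * (Real.pi : ℂ) * (j' : ℂ) * ((i : ℂ) - (i' : ℂ)) * (θ : ℂ)) * Complex.I) *
          ⟪e 0 0 0, T (e 0 (i - i') (j - j'))⟫_ℂ :=
  commutant_matrix_coefficients_general q hq1 θ A B D hA hB hD hAs hBs hDs T hTA hTAs hTB hTD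
end
end

section
/- Let T be an element of the center of 𝒜, i.e., T ∈ 𝒜 and T commutes with every element of 𝒜. Then there exists a function c : ℤ → ℂ such that for all d, d′ ∈ ℕ and i, i′, j, j′ ∈ ℤ one has ⟨e_{d′,i′,j′}, T e_{d,i,j}⟩ = c(j − j′) if d = d′ and i = i′, and ⟨e_{d′,i′,j′}, T e_{d,i,j}⟩ = 0 otherwise. -/
open scoped InnerProductSpace
noncomputable section

/-!
`A` and `A*` are weighted shifts in `d` whose only vanishing weight is `A* e_{0,i,j} = 0`;
commuting with both forces the matrix of `T` to be diagonal in `d` and constant along the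
diagonal. Commuting with `B` and `D`, which act on the layer `d = 0` as the plain shifts in `i` and
in `j`, makes that layer translation invariant in both indices. The coefficients with `i ≠ i'`
vanish because `T` is a norm limit of polynomials in the generators: every monomial is a weighted
shift whose weights tend to zero as `d → ∞` as soon as it moves `i` (it then contains a factor `B`
or `B*`, of weight `q^d` or `q̄^d`), while the corresponding coefficients of `T` do not depend
on `d`.
-/

open Filter Topology ComplexConjugate

section General

variable {𝕜 E : Type*} [RCLike 𝕜] [NormedAddCommGroup E] [InnerProductSpace 𝕜 E]

theorem Commute.inner_apply_of_apply_eq_smul [CompleteSpace E] {T X : E →L[𝕜] E}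
    (hTX : Commute T X) {x x' y y' : E} {α β : 𝕜} (hx : X x = α • x') (hy : star X y = β • y') :
    α * ⟪y, T x'⟫_𝕜 = conj β * ⟪y', T x⟫_𝕜 :=
  calc α * ⟪y, T x'⟫_𝕜 = ⟪y, T (X x)⟫_𝕜 := by rw [hx, map_smul, inner_smul_right]
    _ = ⟪y, X (T x)⟫_𝕜 := by rw [← mul_apply_eq_comp, hTX.eq, mul_apply_eq_comp]
    _ = ⟪star X y, T x⟫_𝕜 := by
      rw [ContinuousLinearMap.star_eq_adjoint, ContinuousLinearMap.adjoint_inner_left]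
    _ = conj β * ⟪y', T x⟫_𝕜 := by rw [hy, inner_smul_left]

theorem lipschitzWith_inner_apply {x y : E} (hx : ‖x‖ ≤ 1) (hy : ‖y‖ ≤ 1) :
    LipschitzWith 1 fun X : E →L[𝕜] E => ⟪y, X x⟫_𝕜 := by
  refine LipschitzWith.of_dist_le_mul fun X Y => ?_
  rw [dist_eq_norm, dist_eq_norm, ← inner_sub_right, ← sub_apply]
  calc ‖⟪y, (X - Y) x⟫_𝕜‖ ≤ ‖y‖ * (‖X - Y‖ * ‖x‖) :=
        (norm_inner_le_norm _ _).trans (by gcongr; exact (X - Y).le_opNorm x)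
    _ ≤ 1 * (‖X - Y‖ * 1) := by gcongr
    _ = _ := by simp

theorem isClosed_setOf_tendsto_inner_apply {x y : ℕ → E} (hx : ∀ d, ‖x d‖ ≤ 1)
    (hy : ∀ d, ‖y d‖ ≤ 1) :
    IsClosed {X : E →L[𝕜] E | Tendsto (fun d => ⟪y d, X (x d)⟫_𝕜) atTop (𝓝 0)} :=
  ((LipschitzWith.uniformEquicontinuous _ 1 fun d =>
    lipschitzWith_inner_apply (hx d) (hy d)).equicontinuous).isClosed_setOfPred_tendsto
    continuous_const

end General

theorem eq_ite_of_raising_lowering_relations {K : Type*} [Field K] {α : ℕ → K} {s : ℕ → ℕ → K}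
    (hα0 : α 0 = 0) (hα : ∀ n, α (n + 1) ≠ 0)
    (hraise : ∀ d d', α (d + 1) * s (d + 1) d' = α d' * s d (d' - 1))
    (hlower : ∀ d d', α d * s (d - 1) d' = α (d' + 1) * s d (d' + 1)) (d d' : ℕ) :
    s d d' = if d = d' then s 0 0 else 0 := by
  induction d generalizing d' with
  | zero =>
    cases d' with
    | zero => simp
    | succ k => simpa [hα0, hα k] using (hlower 0 k).symm
  | succ m ih =>
    cases d' with
    | zero => simpa [hα0, hα m] using hraise m 0
    | succ k =>
      have h := hlower (m + 1) k
      rw [Nat.add_sub_cancel, ih k] at h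
      by_cases hmk : m = k
      · subst hmk
        rw [if_pos rfl] at h ⊢
        exact (mul_left_cancel₀ (hα m) h).symm
      · rw [if_neg hmk, mul_zero] at h
        rw [if_neg (by omega)]
        exact (mul_eq_zero.mp h.symm).resolve_left (hα k)

theorem apply_eq_apply_sub_zero_of_shift_invariant {X : Type*} {f : ℤ → ℤ → X}
    (hf : ∀ m n, f (m + 1) (n + 1) = f m n) (m n : ℤ) : f m n = f (m - n) 0 := by
  induction n using Int.induction_on generalizing m with
  | zero => simp
  | succ n ih =>
    have h := hf (m - 1) n
    rw [sub_add_cancel] at h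
    rw [h, ih]
    ring_nf
  | pred n ih => rw [← hf m, sub_add_cancel, ih]; ring_nf

theorem orthonormal_e : Orthonormal ℂ fun x : ℕ × ℤ × ℤ => e x.1 x.2.1 x.2.2 := by
  convert (default : HilbertBasis (ℕ × ℤ × ℤ) ℂ UqH).orthonormal with x
  exact (default : HilbertBasis (ℕ × ℤ × ℤ) ℂ UqH).repr_symm_single x

theorem norm_e (d : ℕ) (i j : ℤ) : ‖e d i j‖ = 1 :=
  orthonormal_e.1 (d, i, j)

theorem inner_e_e_of_ne {d d' : ℕ} {i i' j j' : ℤ} (h : i ≠ i') : ⟪e d' i' j', e d i j⟫_ℂ = 0 :=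
  orthonormal_e.2 (show ((d', i', j') : ℕ × ℤ × ℤ) ≠ (d, i, j) from
    fun hx => h (congrArg (·.2.1) hx).symm)

def IsWeightedShift (M : UqH →L[ℂ] UqH) : Prop :=
  ∃ (σ : ℕ → ℕ) (β τ : ℤ → ℤ) (γ : ℕ → ℤ → ℤ → ℂ), Tendsto σ atTop atTop ∧
    (∀ d i j, ‖γ d i j‖ ≤ 1) ∧ (∀ i j, β i ≠ i → Tendsto (γ · i j) atTop (𝓝 0)) ∧
    ∀ d i j, M (e d i j) = γ d i j • e (σ d) (β i) (τ j)

namespace IsWeightedShift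

theorem of_apply_eq_smul {M : UqH →L[ℂ] UqH} {σ : ℕ → ℕ} {τ : ℤ → ℤ} {γ : ℕ → ℤ → ℤ → ℂ}
    (hM : ∀ d i j, M (e d i j) = γ d i j • e (σ d) i (τ j)) (hσ : Tendsto σ atTop atTop)
    (hγ : ∀ d i j, ‖γ d i j‖ ≤ 1) : IsWeightedShift M :=
  ⟨σ, fun i => i, τ, γ, hσ, hγ, fun _ _ h => absurd rfl h, hM⟩

theorem of_apply_eq_pow_smul {M : UqH →L[ℂ] UqH} {p : ℂ} {β : ℤ → ℤ}
    (hM : ∀ d i j, M (e d i j) = p ^ d • e d (β i) j) (hp : ‖p‖ < 1) : IsWeightedShift M :=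
  ⟨fun d => d, β, fun j => j, fun d _ _ => p ^ d, tendsto_id,
    fun d _ _ => by simpa using pow_le_one₀ (norm_nonneg p) hp.le,
    fun _ _ _ => tendsto_pow_atTop_nhds_zero_of_norm_lt_one hp, hM⟩

theorem one : IsWeightedShift 1 :=
  of_apply_eq_smul (γ := fun _ _ _ => 1) (fun _ _ _ => (one_smul ℂ _).symm) tendsto_id
    fun _ _ _ => norm_one.le

theorem mul {M N : UqH →L[ℂ] UqH} (hM : IsWeightedShift M) (hN : IsWeightedShift N) :
    IsWeightedShift (M * N) := by
  obtain ⟨σ₁, β₁, τ₁, γ₁, hσ₁, hγ₁, hdecay₁, hM⟩ := hM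
  obtain ⟨σ₂, β₂, τ₂, γ₂, hσ₂, hγ₂, hdecay₂, hN⟩ := hN
  have hle₁ : ∀ d i j, ‖γ₁ (σ₂ d) (β₂ i) (τ₂ j) * γ₂ d i j‖ ≤ ‖γ₁ (σ₂ d) (β₂ i) (τ₂ j)‖ :=
    fun d i j => by rw [norm_mul]; exact mul_le_of_le_one_right (norm_nonneg _) (hγ₂ d i j)
  have hle₂ : ∀ d i j, ‖γ₁ (σ₂ d) (β₂ i) (τ₂ j) * γ₂ d i j‖ ≤ ‖γ₂ d i j‖ :=
    fun d i j => by rw [norm_mul]; exact mul_le_of_le_one_left (norm_nonneg _) (hγ₁ _ _ _)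
  refine ⟨σ₁ ∘ σ₂, β₁ ∘ β₂, τ₁ ∘ τ₂, fun d i j => γ₁ (σ₂ d) (β₂ i) (τ₂ j) * γ₂ d i j,
    hσ₁.comp hσ₂, fun d i j => (hle₂ d i j).trans (hγ₂ d i j), fun i j hβ => ?_, fun d i j => ?_⟩
  · by_cases hβ₂ : β₂ i = i
    · have hβ₁ : β₁ (β₂ i) ≠ β₂ i := by
        rw [Function.comp_apply] at hβ
        rwa [hβ₂] at hβ ⊢
      exact squeeze_zero_norm (fun d => hle₁ d i j)
        (tendsto_zero_iff_norm_tendsto_zero.mp ((hdecay₁ _ _ hβ₁).comp hσ₂))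
    · exact squeeze_zero_norm (fun d => hle₂ d i j)
        (tendsto_zero_iff_norm_tendsto_zero.mp (hdecay₂ i j hβ₂))
  · rw [mul_apply_eq_comp, hN, map_smul, hM, smul_smul, mul_comm]
    rfl

end IsWeightedShift

def offDiagonalDecay : Submodule ℂ (UqH →L[ℂ] UqH) where
  carrier := {X | ∀ i i' j j' : ℤ, i ≠ i' →
    Tendsto (fun d => ⟪e d i' j', X (e d i j)⟫_ℂ) atTop (𝓝 0)}
  zero_mem' _ _ _ _ _ := by simp
  add_mem' hX hY i i' j j' h := by
    simpa [inner_add_right] using (hX i i' j j' h).add (hY i i' j j' h)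
  smul_mem' c _ hX i i' j j' h := by
    simpa [inner_smul_right] using (hX i i' j j' h).const_mul c

theorem isClosed_offDiagonalDecay : IsClosed (offDiagonalDecay : Set (UqH →L[ℂ] UqH)) := by
  simp only [offDiagonalDecay, Submodule.coe_set_mk, AddSubmonoid.coe_set_mk,
    AddSubsemigroup.coe_set_mk, Set.ofPred_forall]
  exact isClosed_iInter fun i => isClosed_iInter fun i' => isClosed_iInter fun j =>
    isClosed_iInter fun j' => isClosed_iInter fun _ =>
      isClosed_setOf_tendsto_inner_apply (fun d => (norm_e d i j).le) fun d => (norm_e d i' j').le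

theorem IsWeightedShift.mem_offDiagonalDecay {M : UqH →L[ℂ] UqH} (hM : IsWeightedShift M) :
    M ∈ offDiagonalDecay := by
  obtain ⟨σ, β, τ, γ, -, -, hdecay, hM⟩ := hM
  intro i i' j j' hi
  simp only [hM, inner_smul_right]
  by_cases hβ : β i = i
  · simp [inner_e_e_of_ne (hβ ▸ hi)]
  · refine squeeze_zero_norm (fun d => ?_)
      (tendsto_zero_iff_norm_tendsto_zero.mp (hdecay i j hβ))
    rw [norm_mul]
    refine mul_le_of_le_one_right (norm_nonneg _) ((norm_inner_le_norm _ _).trans ?_)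
    rw [norm_e, norm_e, one_mul]

theorem mem_offDiagonalDecay_of_mem_topologicalClosure {s : Set (UqH →L[ℂ] UqH)}
    (hs : ∀ X ∈ s, IsWeightedShift X ∧ IsWeightedShift (star X)) {T : UqH →L[ℂ] UqH}
    (hT : T ∈ (StarAlgebra.adjoin ℂ s).topologicalClosure) : T ∈ offDiagonalDecay := by
  have hmonomial : ∀ M ∈ Submonoid.closure (s ∪ star s), IsWeightedShift M := by
    intro M hM
    induction hM using Submonoid.closure_induction with
    | mem X hX =>
      rcases hX with hX | hX
      · exact (hs X hX).1
      · simpa using (hs _ hX).2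
    | one => exact IsWeightedShift.one
    | mul M N _ _ hM hN => exact hM.mul hN
  have hadjoin : Subalgebra.toSubmodule (StarAlgebra.adjoin ℂ s).toSubalgebra ≤
      offDiagonalDecay := by
    rw [StarAlgebra.adjoin_toSubalgebra, Algebra.adjoin_eq_span, Submodule.span_le]
    exact fun M hM => (hmonomial M hM).mem_offDiagonalDecay
  rw [← SetLike.mem_coe, StarSubalgebra.topologicalClosure_coe] at hT
  exact closure_minimal hadjoin isClosed_offDiagonalDecay hT

theorem inner_apply_e_eq_ite_of_commute {q : ℂ} (hq1 : ‖q‖ < 1) {A T : UqH →L[ℂ] UqH}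
    (hA : ∀ (i : ℕ) (j k : ℤ),
      A (e i j k) = ((Real.sqrt (1 - ‖q‖ ^ (2 * (i + 1))) : ℝ) : ℂ) • e (i + 1) j k)
    (hAs : ∀ (i : ℕ) (j k : ℤ),
      (star A) (e i j k) = ((Real.sqrt (1 - ‖q‖ ^ (2 * i)) : ℝ) : ℂ) • e (i - 1) j k)
    (hTA : Commute T A) (hTAs : Commute T (star A)) (d d' : ℕ) (i i' j j' : ℤ) :
    ⟪e d' i' j', T (e d i j)⟫_ℂ = if d = d' then ⟪e 0 i' j', T (e 0 i j)⟫_ℂ else 0 := by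
  refine eq_ite_of_raising_lowering_relations (α := fun m => ((√(1 - ‖q‖ ^ (2 * m)) : ℝ) : ℂ))
    (s := fun d d' => ⟪e d' i' j', T (e d i j)⟫_ℂ) (by simp) (fun n => ?_) (fun d d' => ?_)
    (fun d d' => ?_) d d'
  · have hpow : ‖q‖ ^ (2 * (n + 1)) < 1 := pow_lt_one₀ (norm_nonneg q) hq1 (by omega)
    exact Complex.ofReal_ne_zero.mpr (Real.sqrt_ne_zero'.mpr (by linarith))
  · have h := hTA.inner_apply_of_apply_eq_smul (hA d i j) (hAs d' i' j')
    rwa [Complex.conj_ofReal] at h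
  · have h := hTAs.inner_apply_of_apply_eq_smul (hAs d i j) (by rw [star_star]; exact hA d' i' j')
    rwa [Complex.conj_ofReal] at h

theorem center_element_matrix_coefficients_general
    (q : ℂ) (hq1 : ‖q‖ < 1)
    (θ : ℝ)
    (A B D : UqH →L[ℂ] UqH)
    (hA : ∀ (i : ℕ) (j k : ℤ),
      A (e i j k) = ((Real.sqrt (1 - ‖q‖ ^ (2 * (i + 1))) : ℝ) : ℂ) • e (i + 1) j k)
    (hB : ∀ (i : ℕ) (j k : ℤ), B (e i j k) = (q ^ i) • e i (j + 1) k)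
    (hD : ∀ (i : ℕ) (j k : ℤ),
      D (e i j k) = Complex.exp (-(2 * (Real.pi : ℂ) * (θ : ℂ) * (j : ℂ)) * Complex.I) • e i j (k + 1))
    (hAs : ∀ (i : ℕ) (j k : ℤ),
      (star A) (e i j k) = ((Real.sqrt (1 - ‖q‖ ^ (2 * i)) : ℝ) : ℂ) • e (i - 1) j k)
    (hBs : ∀ (i : ℕ) (j k : ℤ), (star B) (e i j k) = ((starRingEnd ℂ) q ^ i) • e i (j - 1) k)
    (hDs : ∀ (i : ℕ) (j k : ℤ),
      (star D) (e i j k) = Complex.exp ((2 * (Real.pi : ℂ) * (θ : ℂ) * (j : ℂ)) * Complex.I) • e i j (k - 1))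
    (𝒜 : StarSubalgebra ℂ (UqH →L[ℂ] UqH))
    (h𝒜 : 𝒜 = (StarAlgebra.adjoin ℂ ({A, B, D} : Set (UqH →L[ℂ] UqH))).topologicalClosure)
    (T : UqH →L[ℂ] UqH) (hT : T ∈ 𝒜) (hTcomm : ∀ S ∈ 𝒜, T * S = S * T) :
    ∃ c : ℤ → ℂ, ∀ (d d' : ℕ) (i i' j j' : ℤ),
      ⟪e d' i' j', T (e d i j)⟫_ℂ = if d = d' ∧ i = i' then c (j - j') else 0 := by
  subst h𝒜
  have hcomm : ∀ X ∈ ({A, B, D} : Set (UqH →L[ℂ] UqH)), Commute T X ∧ Commute T (star X) :=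
    fun X hX =>
      have hX' := StarSubalgebra.le_topologicalClosure _ (StarAlgebra.subset_adjoin ℂ _ hX)
      ⟨hTcomm X hX', hTcomm _ (star_mem hX')⟩
  obtain ⟨hTA, hTAs⟩ := hcomm A (by simp)
  have hd := inner_apply_e_eq_ite_of_commute hq1 hA hAs hTA hTAs
  have hshift : ∀ X ∈ ({A, B, D} : Set (UqH →L[ℂ] UqH)),
      IsWeightedShift X ∧ IsWeightedShift (star X) := by
    simp only [Set.mem_insert_iff, Set.mem_singleton_iff]
    rintro X (rfl | rfl | rfl)
    · exact ⟨.of_apply_eq_smul hA (tendsto_add_atTop_nat 1) fun _ _ _ => by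
          simp [abs_of_nonneg (Real.sqrt_nonneg _)],
        .of_apply_eq_smul hAs (tendsto_sub_atTop_nat 1) fun _ _ _ => by
          simp [abs_of_nonneg (Real.sqrt_nonneg _)]⟩
    · exact ⟨.of_apply_eq_pow_smul hB hq1, .of_apply_eq_pow_smul hBs (by rwa [RCLike.norm_conj])⟩
    · exact ⟨.of_apply_eq_smul hD tendsto_id fun _ _ _ => by simp [Complex.norm_exp],
        .of_apply_eq_smul hDs tendsto_id fun _ _ _ => by simp [Complex.norm_exp]⟩
  have hoff : ∀ i i' j j', i ≠ i' → ⟪e 0 i' j', T (e 0 i j)⟫_ℂ = 0 := fun i i' j j' h => by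
    have hlim := mem_offDiagonalDecay_of_mem_topologicalClosure hshift hT i i' j j' h
    exact tendsto_nhds_unique
      (tendsto_const_nhds.congr fun d => ((hd d d i i' j j').trans (if_pos rfl)).symm) hlim
  have hi : ∀ i j j', ⟪e 0 i j', T (e 0 i j)⟫_ℂ = ⟪e 0 0 j', T (e 0 0 j)⟫_ℂ := fun i j j' => by
    simpa using apply_eq_apply_sub_zero_of_shift_invariant
      (f := fun m n => ⟪e 0 n j', T (e 0 m j)⟫_ℂ) (fun m n => by
        simpa using (hcomm B (by simp)).1.inner_apply_of_apply_eq_smul (hB 0 m j) (hBs 0 (n + 1) j'))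
      i i
  have hj : ∀ j j', ⟪e 0 0 j', T (e 0 0 j)⟫_ℂ = ⟪e 0 0 0, T (e 0 0 (j - j'))⟫_ℂ := fun j j' =>
    apply_eq_apply_sub_zero_of_shift_invariant (f := fun m n => ⟪e 0 0 n, T (e 0 0 m)⟫_ℂ)
      (fun m n => by
        simpa using (hcomm D (by simp)).1.inner_apply_of_apply_eq_smul (hD 0 0 m) (hDs 0 0 (n + 1)))
      j j'
  refine ⟨fun k => ⟪e 0 0 0, T (e 0 0 k)⟫_ℂ, fun d d' i i' j j' => ?_⟩
  rw [hd]
  rcases eq_or_ne d d' with rfl | hdd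
  · rcases eq_or_ne i i' with rfl | hii
    · simp [hi, hj]
    · simp [hoff i i' j j' hii, hii]
  · simp [hdd]

/-- any element `T` of the center of `𝒜 = C(U_q(2))` has matrix coefficients
`⟨e_{d′,i′,j′}, T e_{d,i,j}⟩ = c(j − j′)` if `d = d′` and `i = i′`, and `0` otherwise,
for some function `c : ℤ → ℂ`. -/
theorem center_element_matrix_coefficients
    (q : ℂ) (hq0 : 0 < ‖q‖) (hq1 : ‖q‖ < 1)
    (θ : ℝ) (hθ : θ = Complex.arg q / Real.pi)
    (A B D : UqH →L[ℂ] UqH)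
    (hA : ∀ (i : ℕ) (j k : ℤ),
      A (e i j k) = ((Real.sqrt (1 - ‖q‖ ^ (2 * (i + 1))) : ℝ) : ℂ) • e (i + 1) j k)
    (hB : ∀ (i : ℕ) (j k : ℤ), B (e i j k) = (q ^ i) • e i (j + 1) k)
    (hD : ∀ (i : ℕ) (j k : ℤ),
      D (e i j k) = Complex.exp (-(2 * (Real.pi : ℂ) * (θ : ℂ) * (j : ℂ)) * Complex.I) • e i j (k + 1))
    (hAs : ∀ (i : ℕ) (j k : ℤ),
      (star A) (e i j k) = ((Real.sqrt (1 - ‖q‖ ^ (2 * i)) : ℝ) : ℂ) • e (i - 1) j k)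
    (hBs : ∀ (i : ℕ) (j k : ℤ), (star B) (e i j k) = ((starRingEnd ℂ) q ^ i) • e i (j - 1) k)
    (hDs : ∀ (i : ℕ) (j k : ℤ),
      (star D) (e i j k) = Complex.exp ((2 * (Real.pi : ℂ) * (θ : ℂ) * (j : ℂ)) * Complex.I) • e i j (k - 1))
    (𝒜 : StarSubalgebra ℂ (UqH →L[ℂ] UqH))
    (h𝒜 : 𝒜 = (StarAlgebra.adjoin ℂ ({A, B, D} : Set (UqH →L[ℂ] UqH))).topologicalClosure)
    (T : UqH →L[ℂ] UqH) (hT : T ∈ 𝒜) (hTcomm : ∀ S ∈ 𝒜, T * S = S * T) :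
    ∃ c : ℤ → ℂ, ∀ (d d' : ℕ) (i i' j j' : ℤ),
      ⟪e d' i' j', T (e d i j)⟫_ℂ = if d = d' ∧ i = i' then c (j - j') else 0 :=
  center_element_matrix_coefficients_general q hq1 θ A B D hA hB hD hAs hBs hDs 𝒜 h𝒜 T hT hTcomm
end
end
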